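/- arXiv:1806.04159 — 2 statements merged into one kernel-verified Lean document; each statement's English description precedes it below -/
import Mathlib

section
/- Let a^ν, a^μ be two symmetric, coercive (constant A_min), bounded (constant A_max) bilinear forms on a Hilbert space H with ‖a^ν − a^μ‖ ≤ δ in operator norm. Let X_k ⊆ X_ℓ ⊆ H be closed subspaces and let P_k^ν, P_k^μ denote the Galerkin projections onto X_k with respect to a^ν and a^μ respectively. Then for all v ∈ X_ℓ: ‖P_k^ν v − P_k^μ v‖_H ≤ A_min^{−3/2} A_max^{1/2} δ · inf_{w ∈ X_k} ‖v − w‖_H. -/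
/-!
Write `e = P^ν v - P^μ v ∈ X_k`. Galerkin orthogonality for both forms gives
`a^ν(e, e) = a^ν(v - P^μ v, e) - a^μ(v - P^μ v, e)`, so coercivity and the perturbation bound yield
`A_min ‖e‖ ≤ δ ‖v - P^μ v‖`. Since `a^μ` is symmetric and `v - P^μ v` is `a^μ`-orthogonal to `X_k`,
Pythagoras in the energy norm gives Céa's estimate
`‖v - P^μ v‖ ≤ (A_max / A_min)^{1/2} ‖v - w‖` for every `w ∈ X_k`.
-/

namespace Galerkin

section Algebraic

variable {H : Type*} [AddCommGroup H] {a : H → H → ℝ}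

theorem map_sub_left (hadd : ∀ u v w, a (u + v) w = a u w + a v w) (u v w : H) :
    a (u - v) w = a u w - a v w := by
  have h := hadd (u - v) v w
  rw [sub_add_cancel] at h
  linarith

theorem map_add_self_of_eq_zero (hsymm : ∀ u v, a u v = a v u)
    (hadd : ∀ u v w, a (u + v) w = a u w + a v w) {x y : H} (hxy : a x y = 0) :
    a (x + y) (x + y) = a x x + a y y := by
  rw [hadd, hsymm x, hsymm y, hadd, hadd, hsymm y x, hxy]
  ring

theorem map_sub_eq_zero [Module ℝ H] (hadd : ∀ u v w, a (u + v) w = a u w + a v w)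
    {X : Submodule ℝ H} {v p : H} (hgal : ∀ w ∈ X, a p w = a v w) {z : H} (hz : z ∈ X) :
    a (v - p) z = 0 := by
  rw [map_sub_left hadd, hgal z hz, sub_self]

end Algebraic

variable {H : Type*} [NormedAddCommGroup H] [Module ℝ H] {X : Submodule ℝ H} {Amin : ℝ}

theorem norm_sub_le_of_perturbation {aν aμ : H → H → ℝ} {δ : ℝ} (hAmin : 0 < Amin)
    (hδ : 0 ≤ δ) (haddν : ∀ u v w, aν (u + v) w = aν u w + aν v w)
    (haddμ : ∀ u v w, aμ (u + v) w = aμ u w + aμ v w)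
    (hcoerν : ∀ w, Amin * ‖w‖ ^ 2 ≤ aν w w)
    (hdiff : ∀ u v, |aν u v - aμ u v| ≤ δ * ‖u‖ * ‖v‖) {v pν pμ : H} (hpν : pν ∈ X)
    (hgalν : ∀ w ∈ X, aν pν w = aν v w) (hpμ : pμ ∈ X) (hgalμ : ∀ w ∈ X, aμ pμ w = aμ v w) :
    ‖pν - pμ‖ ≤ δ / Amin * ‖v - pμ‖ := by
  have he : pν - pμ ∈ X := X.sub_mem hpν hpμ
  have hsplit : aν (pν - pμ) (pν - pμ)
      = aν (v - pμ) (pν - pμ) - aμ (v - pμ) (pν - pμ) := by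
    rw [map_sub_eq_zero haddμ hgalμ he, sub_zero, map_sub_left haddν pν, map_sub_left haddν v,
      hgalν _ he]
  have hsq : Amin * ‖pν - pμ‖ ^ 2 ≤ δ * ‖v - pμ‖ * ‖pν - pμ‖ :=
    calc Amin * ‖pν - pμ‖ ^ 2 ≤ aν (pν - pμ) (pν - pμ) := hcoerν _
      _ = aν (v - pμ) (pν - pμ) - aμ (v - pμ) (pν - pμ) := hsplit
      _ ≤ δ * ‖v - pμ‖ * ‖pν - pμ‖ := (le_abs_self _).trans (hdiff _ _)
  rw [div_mul_eq_mul_div, le_div_iff₀ hAmin]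
  rcases (norm_nonneg (pν - pμ)).eq_or_lt with hzero | hpos
  · rw [← hzero, zero_mul]
    positivity
  · exact le_of_mul_le_mul_right (by nlinarith) hpos

theorem norm_sub_le_sqrt_mul {a : H → H → ℝ} {Amax : ℝ} (hAmin : 0 < Amin)
    (hsymm : ∀ u v, a u v = a v u) (hadd : ∀ u v w, a (u + v) w = a u w + a v w)
    (hcoer : ∀ w, Amin * ‖w‖ ^ 2 ≤ a w w) (hbdd : ∀ u v, |a u v| ≤ Amax * ‖u‖ * ‖v‖)
    {v p w : H} (hp : p ∈ X) (hgal : ∀ w ∈ X, a p w = a v w) (hw : w ∈ X) :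
    ‖v - p‖ ≤ √(Amax / Amin) * ‖v - w‖ := by
  have hpyth : a (v - w) (v - w) = a (v - p) (v - p) + a (p - w) (p - w) := by
    rw [← map_add_self_of_eq_zero hsymm hadd (map_sub_eq_zero hadd hgal (X.sub_mem hp hw)),
      sub_add_sub_cancel]
  have henergy : Amin * ‖v - p‖ ^ 2 ≤ Amax * ‖v - w‖ ^ 2 :=
    calc Amin * ‖v - p‖ ^ 2 ≤ a (v - p) (v - p) := hcoer _
      _ ≤ a (v - w) (v - w) := by nlinarith [hcoer (p - w)]
      _ ≤ Amax * ‖v - w‖ * ‖v - w‖ := (le_abs_self _).trans (hbdd _ _)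
      _ = Amax * ‖v - w‖ ^ 2 := by ring
  rw [← Real.sqrt_sq (norm_nonneg (v - w)), ← Real.sqrt_mul' _ (sq_nonneg _)]
  apply Real.le_sqrt_of_sq_le
  rw [div_mul_eq_mul_div, le_div_iff₀ hAmin]
  linarith

end Galerkin

theorem rpow_neg_three_halves_mul_rpow_half_mul {x y : ℝ} (hx : 0 < x) (hy : 0 ≤ y) (c : ℝ) :
    x ^ (-(3 / 2) : ℝ) * y ^ ((1 / 2) : ℝ) * c = c / x * √(y / x) := by
  rw [Real.sqrt_eq_rpow, Real.div_rpow hy hx.le, show (-(3 / 2) : ℝ) = -1 + -(1 / 2) by norm_num,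
    Real.rpow_add hx, Real.rpow_neg_one, Real.rpow_neg hx.le]
  field_simp

open Galerkin in
theorem stmt_3_general {H : Type*} [NormedAddCommGroup H] [InnerProductSpace ℝ H]
    (aν aμ : H → H → ℝ) (Amin Amax δ : ℝ) (hAmin : 0 < Amin) (hAminmax : Amin ≤ Amax)
    (hδ : 0 ≤ δ)
    (hsymmμ : ∀ u v, aμ u v = aμ v u)
    (haddν : ∀ u v w, aν (u + v) w = aν u w + aν v w)
    (haddμ : ∀ u v w, aμ (u + v) w = aμ u w + aμ v w)
    (hcoerν : ∀ w, Amin * ‖w‖ ^ 2 ≤ aν w w) (hcoerμ : ∀ w, Amin * ‖w‖ ^ 2 ≤ aμ w w)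
    (hbddμ : ∀ u v, |aμ u v| ≤ Amax * ‖u‖ * ‖v‖)
    (hdiff : ∀ u v, |aν u v - aμ u v| ≤ δ * ‖u‖ * ‖v‖)
    (Xk : Submodule ℝ H)
    (v : H)
    (pν : H) (hpν : pν ∈ Xk) (hgalν : ∀ w ∈ Xk, aν pν w = aν v w)
    (pμ : H) (hpμ : pμ ∈ Xk) (hgalμ : ∀ w ∈ Xk, aμ pμ w = aμ v w) :
    ∀ w ∈ Xk, ‖pν - pμ‖ ≤ Amin ^ (-(3 / 2) : ℝ) * Amax ^ ((1 / 2) : ℝ) * δ * ‖v - w‖ := by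
  intro w hw
  calc ‖pν - pμ‖
      ≤ δ / Amin * ‖v - pμ‖ :=
        norm_sub_le_of_perturbation hAmin hδ haddν haddμ hcoerν hdiff hpν hgalν hpμ hgalμ
    _ ≤ δ / Amin * (√(Amax / Amin) * ‖v - w‖) := by
        gcongr
        exact norm_sub_le_sqrt_mul hAmin hsymmμ haddμ hcoerμ hbddμ hpμ hgalμ hw
    _ = Amin ^ (-(3 / 2) : ℝ) * Amax ^ ((1 / 2) : ℝ) * δ * ‖v - w‖ := by
        rw [rpow_neg_three_halves_mul_rpow_half_mul hAmin (hAmin.le.trans hAminmax)]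
        ring

/-- Stability of Galerkin projections with respect to perturbation of the bilinear form. -/
theorem stmt_3 {H : Type*} [NormedAddCommGroup H] [InnerProductSpace ℝ H]
    (aν aμ : H → H → ℝ) (Amin Amax δ : ℝ) (hAmin : 0 < Amin) (hAminmax : Amin ≤ Amax)
    (hδ : 0 ≤ δ)
    (hsymmν : ∀ u v, aν u v = aν v u) (hsymmμ : ∀ u v, aμ u v = aμ v u)
    (haddν : ∀ u v w, aν (u + v) w = aν u w + aν v w)
    (haddμ : ∀ u v w, aμ (u + v) w = aμ u w + aμ v w)
    (hsmulν : ∀ (c : ℝ) (u w : H), aν (c • u) w = c * aν u w)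
    (hsmulμ : ∀ (c : ℝ) (u w : H), aμ (c • u) w = c * aμ u w)
    (hcoerν : ∀ w, Amin * ‖w‖ ^ 2 ≤ aν w w) (hcoerμ : ∀ w, Amin * ‖w‖ ^ 2 ≤ aμ w w)
    (hbddν : ∀ u v, |aν u v| ≤ Amax * ‖u‖ * ‖v‖)
    (hbddμ : ∀ u v, |aμ u v| ≤ Amax * ‖u‖ * ‖v‖)
    (hdiff : ∀ u v, |aν u v - aμ u v| ≤ δ * ‖u‖ * ‖v‖)
    (Xk Xl : Submodule ℝ H) (hsub : Xk ≤ Xl)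
    (v : H) (hv : v ∈ Xl)
    (pν : H) (hpν : pν ∈ Xk) (hgalν : ∀ w ∈ Xk, aν pν w = aν v w)
    (pμ : H) (hpμ : pμ ∈ Xk) (hgalμ : ∀ w ∈ Xk, aμ pμ w = aμ v w) :
    ∀ w ∈ Xk, ‖pν - pμ‖ ≤ Amin ^ (-(3 / 2) : ℝ) * Amax ^ ((1 / 2) : ℝ) * δ * ‖v - w‖ :=
  stmt_3_general aν aμ Amin Amax δ hAmin hAminmax hδ hsymmμ haddν haddμ hcoerν hcoerμ hbddμ hdiff Xk
    v pν hpν hgalν pμ hpμ hgalμ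
end

section
/- Let g : [−1/2,1/2]^s → ℝ be C² and suppose g(ω) = 0 whenever ω_i = 0 for all i > r (0 ≤ r ≤ s). Then there exists a function g₀ in the span of functions of the form (ω ↦ α(ω₁,…,ω_r)·ω_i) for r+1 ≤ i ≤ s, namely g₀(ω) = Σ_{i=r+1}^s ω_i ∂_{ω_i} g(ω₁,…,ω_r,0,…,0), such that ‖g − g₀‖_{L^∞} ≤ (1/2) Σ_{i=r+1}^{s} Σ_{j=r+1}^{i} ‖∂_{ω_i}∂_{ω_j} g‖_{L^∞}. -/
/-!
Let `p` be `ω` with its coordinates of index `≥ r` set to zero. Then `g p = 0` and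
`g₀ ω = Dg(p)(ω - p)`, so `g ω - g₀ ω` is the first-order Taylor remainder of `g` at `p`, which is
bounded by the supremum of `D²g(·)(v, v)` over the cube, `v = ω - p`. Expanding `v` in coordinates
gives `|D²g(v, v)| ≤ 1/4 · ∑_{i, j ≥ r} |∂ᵢ∂ⱼ g|`, and the symmetry of the Hessian folds this double
sum onto the pairs `j ≤ i` at the cost of a factor `2`.
-/

open Finset Metric

theorem sum_sum_le_two_mul_sum_sum_filter_le {ι : Type*} [LinearOrder ι] (S : Finset ι)
    (b : ι → ι → ℝ) (hb_nonneg : ∀ i j, 0 ≤ b i j) (hb_symm : ∀ i j, b i j = b j i) :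
    ∑ i ∈ S, ∑ j ∈ S, b i j ≤ 2 * ∑ i ∈ S, ∑ j ∈ S with j ≤ i, b i j := by
  have hupper : ∑ i ∈ S, ∑ j ∈ S with ¬j ≤ i, b i j ≤ ∑ i ∈ S, ∑ j ∈ S with j ≤ i, b i j :=
    calc ∑ i ∈ S, ∑ j ∈ S with ¬j ≤ i, b i j = ∑ j ∈ S, ∑ i ∈ S with i < j, b j i := by
          simp only [not_le, sum_filter]
          rw [sum_comm]
          simp only [hb_symm]
      _ ≤ ∑ j ∈ S, ∑ i ∈ S with i ≤ j, b j i :=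
          sum_le_sum fun j _ => sum_le_sum_of_subset_of_nonneg
            (fun i hi => mem_filter.2 ⟨(mem_filter.1 hi).1, (mem_filter.1 hi).2.le⟩)
            fun i _ _ => hb_nonneg j i
  calc ∑ i ∈ S, ∑ j ∈ S, b i j
      = ∑ i ∈ S, ∑ j ∈ S with j ≤ i, b i j + ∑ i ∈ S, ∑ j ∈ S with ¬j ≤ i, b i j := by
        rw [← sum_add_distrib]
        simp only [sum_filter_add_sum_filter_not]
    _ ≤ 2 * ∑ i ∈ S, ∑ j ∈ S with j ≤ i, b i j := by linarith

theorem LinearMap.BilinForm.abs_apply_sum_smul_le {E ι : Type*} [AddCommGroup E] [Module ℝ E]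
    [LinearOrder ι] (B : LinearMap.BilinForm ℝ E) (e : ι → E)
    (hB : ∀ i j, B (e i) (e j) = B (e j) (e i)) (S : Finset ι) (a : ι → ℝ) {c : ℝ}
    (ha : ∀ i ∈ S, |a i| ≤ c) :
    |B (∑ i ∈ S, a i • e i) (∑ i ∈ S, a i • e i)| ≤
      2 * c ^ 2 * ∑ i ∈ S, ∑ j ∈ S with j ≤ i, |B (e i) (e j)| := by
  have hexpand : B (∑ i ∈ S, a i • e i) (∑ j ∈ S, a j • e j) =
      ∑ i ∈ S, ∑ j ∈ S, a i * a j * B (e i) (e j) := by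
    simp only [map_sum, map_smul, LinearMap.sum_apply, LinearMap.smul_apply, smul_eq_mul,
      mul_sum]
    rw [Finset.sum_comm]
    exact sum_congr rfl fun i _ => sum_congr rfl fun j _ => by ring
  calc |B (∑ i ∈ S, a i • e i) (∑ i ∈ S, a i • e i)|
      ≤ ∑ i ∈ S, ∑ j ∈ S, |a i * a j * B (e i) (e j)| := by
        rw [hexpand]
        exact (abs_sum_le_sum_abs _ _).trans (sum_le_sum fun i _ => abs_sum_le_sum_abs _ _)
    _ ≤ ∑ i ∈ S, ∑ j ∈ S, c ^ 2 * |B (e i) (e j)| := by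
        refine sum_le_sum fun i hi => sum_le_sum fun j hj => ?_
        rw [abs_mul, abs_mul, sq]
        gcongr
        · exact (abs_nonneg _).trans (ha i hi)
        · exact ha i hi
        · exact ha j hj
    _ = c ^ 2 * ∑ i ∈ S, ∑ j ∈ S, |B (e i) (e j)| := by simp only [mul_sum]
    _ ≤ c ^ 2 * (2 * ∑ i ∈ S, ∑ j ∈ S with j ≤ i, |B (e i) (e j)|) := by
        gcongr
        exact sum_sum_le_two_mul_sum_sum_filter_le S _ (fun _ _ => abs_nonneg _)
          fun i j => by rw [hB]
    _ = 2 * c ^ 2 * ∑ i ∈ S, ∑ j ∈ S with j ≤ i, |B (e i) (e j)| := by ring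

section Taylor

variable {E F : Type*} [NormedAddCommGroup E] [NormedSpace ℝ E] [NormedAddCommGroup F]
  [NormedSpace ℝ F] {f : E → F}

theorem fderiv_fderiv_apply {x : E} (hf : DifferentiableAt ℝ (fderiv ℝ f) x) (u w : E) :
    fderiv ℝ (fun y => fderiv ℝ f y u) x w = fderiv ℝ (fderiv ℝ f) x w u := by
  rw [fderiv_clm_apply hf (differentiableAt_const u)]
  simp

theorem norm_sub_sub_fderiv_apply_le (hf : Differentiable ℝ f)
    (hf' : Differentiable ℝ (fderiv ℝ f)) {s : Set E} (hs : Convex ℝ s) {x y : E} (hx : x ∈ s)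
    (hy : y ∈ s) {C : ℝ} (hC : ∀ z ∈ s, ‖fderiv ℝ (fderiv ℝ f) z (y - x) (y - x)‖ ≤ C) :
    ‖f y - f x - fderiv ℝ f x (y - x)‖ ≤ C := by
  set v := y - x
  set γ : ℝ → E := fun t => x + t • v
  have hγ : ∀ t, HasDerivAt γ v t := fun t => by
    simpa [γ] using ((hasDerivAt_id t).smul_const v).const_add x
  have hγs : ∀ t ∈ Set.Icc (0 : ℝ) 1, γ t ∈ s := fun t ht => hs.add_smul_sub_mem hx hy ht
  set A : ℝ → F := fun t => fderiv ℝ f (γ t) v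
  have hA : ∀ t, HasDerivAt A (fderiv ℝ (fderiv ℝ f) (γ t) v v) t := fun t =>
    ((ContinuousLinearMap.apply ℝ F v).hasFDerivAt.comp (γ t)
      (hf' (γ t)).hasFDerivAt).comp_hasDerivAt t (hγ t)
  have hA_sub : ∀ t ∈ Set.Icc (0 : ℝ) 1, ‖A t - A 0‖ ≤ C * (t - 0) :=
    norm_image_sub_le_of_norm_deriv_le_segment' (fun t _ => (hA t).hasDerivWithinAt)
      fun t ht => hC _ (hγs t (Set.Ico_subset_Icc_self ht))
  have hk : ∀ t, HasDerivAt (fun t => f (γ t) - t • A 0) (A t - A 0) t := fun t =>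
    ((hf (γ t)).hasFDerivAt.comp_hasDerivAt t (hγ t)).sub
      (by simpa using (hasDerivAt_id t).smul_const (A 0))
  have hC0 : 0 ≤ C := (norm_nonneg _).trans (hC x hx)
  have := norm_image_sub_le_of_norm_deriv_le_segment_01' (fun t _ => (hk t).hasDerivWithinAt)
    fun t ht => (hA_sub t (Set.Ico_subset_Icc_self ht)).trans
      (by rw [sub_zero]; exact mul_le_of_le_one_right hC0 ht.2.le)
  simpa [γ, A, v, sub_sub, add_comm] using this

end Taylor

theorem abs_fderiv_fderiv_apply_sum_smul_single_le {ι : Type*} [Fintype ι] [LinearOrder ι]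
    {g : (ι → ℝ) → ℝ} (hg : ContDiff ℝ 2 g) (z : ι → ℝ) (S : Finset ι) (a : ι → ℝ) {c : ℝ}
    (ha : ∀ i ∈ S, |a i| ≤ c) :
    |fderiv ℝ (fderiv ℝ g) z (∑ i ∈ S, a i • Pi.single i 1) (∑ i ∈ S, a i • Pi.single i 1)| ≤
      2 * c ^ 2 * ∑ i ∈ S, ∑ j ∈ S with j ≤ i,
        |fderiv ℝ (fun x => fderiv ℝ g x (Pi.single j 1)) z (Pi.single i 1)| := by
  have hg' : DifferentiableAt ℝ (fderiv ℝ g) z :=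
    (hg.fderiv_right le_rfl).differentiable one_ne_zero z
  have hsymm := hg.contDiffAt.isSymmSndFDerivAt (x := z) (by simp)
  simp only [fderiv_fderiv_apply hg']
  exact LinearMap.BilinForm.abs_apply_sum_smul_le (fderiv ℝ (fderiv ℝ g) z).toLinearMap₁₂ _
    (fun i j => hsymm _ _) S a ha

theorem stmt_7_general (s r : ℕ)
    (g : (Fin s → ℝ) → ℝ) (hg : ContDiff ℝ 2 g)
    (hzero : ∀ ω : Fin s → ℝ, (∀ i, |ω i| ≤ 1 / 2) →
      (∀ i : Fin s, r ≤ (i : ℕ) → ω i = 0) → g ω = 0)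
    (M2 : Fin s → Fin s → ℝ)
    (hM2 : ∀ (i j : Fin s) (ω : Fin s → ℝ), (∀ k, |ω k| ≤ 1 / 2) →
      |fderiv ℝ (fun x => fderiv ℝ g x (Pi.single j 1)) ω (Pi.single i 1)| ≤ M2 i j)
    (g₀ : (Fin s → ℝ) → ℝ)
    (hg₀ : ∀ ω : Fin s → ℝ, g₀ ω =
      ∑ i ∈ Finset.univ.filter (fun i : Fin s => r ≤ (i : ℕ)),
        ω i * fderiv ℝ g (fun j => if (j : ℕ) < r then ω j else 0) (Pi.single i 1)) :
    ∀ ω : Fin s → ℝ, (∀ j, |ω j| ≤ 1 / 2) →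
      |g ω - g₀ ω| ≤ (1 / 2) *
        ∑ i ∈ Finset.univ.filter (fun i : Fin s => r ≤ (i : ℕ)),
          ∑ j ∈ Finset.univ.filter (fun j : Fin s => r ≤ (j : ℕ) ∧ (j : ℕ) ≤ (i : ℕ)), M2 i j := by
  intro ω hω
  set S : Finset (Fin s) := univ.filter (fun i : Fin s => r ≤ (i : ℕ)) with hS
  set p : Fin s → ℝ := fun j => if (j : ℕ) < r then ω j else 0
  have hcube : ∀ x : Fin s → ℝ, x ∈ closedBall 0 (1 / 2) ↔ ∀ k, |x k| ≤ 1 / 2 := fun x => by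
    simp [pi_norm_le_iff_of_nonneg]
  have hp : p ∈ closedBall 0 (1 / 2) :=
    (hcube p).2 fun k => by
      by_cases h : (k : ℕ) < r
      · simpa [p, h] using hω k
      · simp [p, h]
  have hgp : g p = 0 := hzero p ((hcube p).1 hp) fun i hi => by simp [p, hi.not_gt]
  have hv : ω - p = ∑ i ∈ S, ω i • Pi.single i 1 := by
    ext j; by_cases h : (j : ℕ) < r <;> simp [p, S, h, Pi.single_apply]
  have hg₀p : g₀ ω = fderiv ℝ g p (ω - p) := by
    simp [hg₀, hv, map_sum, p]
  have hD2 : ∀ z ∈ closedBall (0 : Fin s → ℝ) (1 / 2),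
      ‖fderiv ℝ (fderiv ℝ g) z (ω - p) (ω - p)‖ ≤
        1 / 2 * ∑ i ∈ S, ∑ j ∈ univ.filter (fun j : Fin s => r ≤ (j : ℕ) ∧ (j : ℕ) ≤ (i : ℕ)),
          M2 i j := by
    intro z hz
    rw [hv, Real.norm_eq_abs]
    refine (abs_fderiv_fderiv_apply_sum_smul_single_le hg z S ω fun i _ => hω i).trans ?_
    rw [show 2 * (1 / 2 : ℝ) ^ 2 = 1 / 2 by norm_num]
    simp only [hS, filter_filter]
    gcongr with i
    exact sum_le_sum fun j _ => hM2 i j z ((hcube z).1 hz)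
  simpa [hgp, hg₀p] using norm_sub_sub_fderiv_apply_le (hg.differentiable two_ne_zero)
    ((hg.fderiv_right le_rfl).differentiable one_ne_zero) (convex_closedBall 0 (1 / 2)) hp
    ((hcube ω).2 hω) hD2

/-- Second-order remainder bound: if a C² function `g` on `[-1/2,1/2]^s` vanishes whenever all
coordinates with index `≥ r` vanish, then subtracting the explicit function
`g₀(ω) = Σ_{i ≥ r} ω_i ∂_i g(ω₁,…,ω_r,0,…,0)` (which lies in the span of functions
`ω ↦ α(ω₁,…,ω_r) ω_i`) leaves a remainder bounded by half the sum of the sup norms of the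
second derivatives in the coordinates with index `≥ r`. -/
theorem stmt_7 (s r : ℕ) (hr : r ≤ s)
    (g : (Fin s → ℝ) → ℝ) (hg : ContDiff ℝ 2 g)
    (hzero : ∀ ω : Fin s → ℝ, (∀ i, |ω i| ≤ 1 / 2) →
      (∀ i : Fin s, r ≤ (i : ℕ) → ω i = 0) → g ω = 0)
    (M2 : Fin s → Fin s → ℝ)
    (hM2 : ∀ (i j : Fin s) (ω : Fin s → ℝ), (∀ k, |ω k| ≤ 1 / 2) →
      |fderiv ℝ (fun x => fderiv ℝ g x (Pi.single j 1)) ω (Pi.single i 1)| ≤ M2 i j)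
    (g₀ : (Fin s → ℝ) → ℝ)
    (hg₀ : ∀ ω : Fin s → ℝ, g₀ ω =
      ∑ i ∈ Finset.univ.filter (fun i : Fin s => r ≤ (i : ℕ)),
        ω i * fderiv ℝ g (fun j => if (j : ℕ) < r then ω j else 0) (Pi.single i 1)) :
    ∀ ω : Fin s → ℝ, (∀ j, |ω j| ≤ 1 / 2) →
      |g ω - g₀ ω| ≤ (1 / 2) *
        ∑ i ∈ Finset.univ.filter (fun i : Fin s => r ≤ (i : ℕ)),
          ∑ j ∈ Finset.univ.filter (fun j : Fin s => r ≤ (j : ℕ) ∧ (j : ℕ) ≤ (i : ℕ)), M2 i j :=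
  stmt_7_general s r g hg hzero M2 hM2 g₀ hg₀
end
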